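/- For positive natural numbers n₁ ≥ n₂ ≥ n₃, the equation ρ(n₁)+ρ(n₂)+ρ(n₃) = 4 with ρ(n) = 2n/(n+1) has exactly the solutions (n₁,n₂,n₃) ∈ {(5,2,1), (3,3,1), (2,2,2)}. -/

import Mathlib

/-!
Since `ρ(n) = 2 - 2/(n+1)`, the equation says `1/x + 1/y + 1/z = 1` for `x = n₁+1 ≥ y = n₂+1 ≥ z = n₃+1`,
i.e. `xy + xz + yz = xyz`. The smallest denominator forces `z ≤ 3` (and `z ≠ 1`), then `(z-1)y ≤ 2z` bounds `y`,
and for each remaining pair `(y, z)` the equation is linear in `x`.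
-/

noncomputable def rho (n : ℕ) : ℝ := 2 * n / (n + 1)

theorem rho_eq_two_sub (n : ℕ) : rho n = 2 - 2 / (n + 1) := by
  unfold rho
  field_simp
  ring

theorem inv_add_inv_add_inv_eq_one_iff {x y z : ℕ} (hx : 0 < x) (hy : 0 < y) (hz : 0 < z) :
    (x : ℝ)⁻¹ + (y : ℝ)⁻¹ + (z : ℝ)⁻¹ = 1 ↔ x * y + x * z + y * z = x * y * z := by
  rw [← Nat.cast_inj (R := ℝ)]
  push_cast
  field_simp
  constructor <;> intro h <;> linarith

theorem mul_add_mul_add_mul_eq_mul_mul_iff {x y z : ℕ} (hz : 0 < z) (hzy : z ≤ y) (hyx : y ≤ x) :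
    x * y + x * z + y * z = x * y * z ↔
      (x, y, z) = (6, 3, 2) ∨ (x, y, z) = (4, 4, 2) ∨ (x, y, z) = (3, 3, 3) := by
  constructor
  · intro h
    simp only [Prod.mk.injEq]
    have hxy : 0 < x * y := Nat.mul_pos (by omega) (by omega)
    have hz3 : z ≤ 3 := by nlinarith [Nat.mul_le_mul_left x hzy, Nat.mul_le_mul_right z hyx]
    interval_cases z
    · nlinarith
    · have hy4 : y ≤ 4 := by nlinarith
      interval_cases y <;> omega
    · obtain rfl : y = 3 := by nlinarith
      omega
  · rintro (h | h | h) <;> (cases h; rfl)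

theorem stmt12_general (n₁ n₂ n₃ : ℕ) (h₃₂ : n₃ ≤ n₂) (h₂₁ : n₂ ≤ n₁) :
    rho n₁ + rho n₂ + rho n₃ = 4 ↔
      (n₁, n₂, n₃) = (5, 2, 1) ∨ (n₁, n₂, n₃) = (3, 3, 1) ∨
        (n₁, n₂, n₃) = (2, 2, 2) := by
  have h_inv : rho n₁ + rho n₂ + rho n₃ = 4 ↔
      ((n₁ + 1 : ℕ) : ℝ)⁻¹ + ((n₂ + 1 : ℕ) : ℝ)⁻¹ + ((n₃ + 1 : ℕ) : ℝ)⁻¹ = 1 := by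
    simp only [rho_eq_two_sub, Nat.cast_add, Nat.cast_one, div_eq_mul_inv]
    constructor <;> intro h <;> linarith
  rw [h_inv, inv_add_inv_add_inv_eq_one_iff (by omega) (by omega) (by omega),
    mul_add_mul_add_mul_eq_mul_mul_iff (by omega) (by omega) (by omega)]
  simp only [Prod.mk.injEq]
  omega

/-- The only ordered triples of positive integers with `ρ(n₁)+ρ(n₂)+ρ(n₃)=4`
are `(5,2,1)`, `(3,3,1)` and `(2,2,2)`. -/
theorem stmt12 (n₁ n₂ n₃ : ℕ) (h₃ : 1 ≤ n₃) (h₃₂ : n₃ ≤ n₂) (h₂₁ : n₂ ≤ n₁) :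
    rho n₁ + rho n₂ + rho n₃ = 4 ↔
      (n₁, n₂, n₃) = (5, 2, 1) ∨ (n₁, n₂, n₃) = (3, 3, 1) ∨
        (n₁, n₂, n₃) = (2, 2, 2) :=
  stmt12_general n₁ n₂ n₃ h₃₂ h₂₁
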